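/- arXiv:2511.04424 — 2 statements merged into one kernel-verified Lean document; each statement's English description precedes it below -/
import Mathlib

section
/- With the corner-compression setup, suppose (q̃_c, q_s) ∈ ℂˡ × ℂ^{n_s} solves the compressed system D_cc·q̃_c + B_cs·q_s = f̃_c and B_sc·q̃_c + A_ss·q_s = f_s. Define q_c = A_cc⁻¹·U·D_cc·q̃_c + (A_cc⁻¹ − A_cc⁻¹·U·D_cc·V*·A_cc⁻¹)·f_c. Then (q_c, q_s) solves the original system A_cc·q_c + A_cs·q_s = f_c and A_sc·q_c + A_ss·q_s = f_s, and moreover V*·q_c = q̃_c. -/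
/-! Substituting `D_cc q̃_c - f̃_c = -B_cs q_s` into the recovery formula gives
`q_c = A_cc⁻¹ (f_c - A_cs q_s)`, which is the first original equation. Multiplying the first
compressed equation by `V* A_cc⁻¹ U = D_cc⁻¹` gives `q̃_c = V* A_cc⁻¹ (f_c - A_cs q_s) = V* q_c`,
and then the second original equation is the second compressed one, as `A_sc = B_sc V*`. -/

open Matrix

section

variable {R : Type*} [Ring R] {c k l : Type*} [Fintype c] [Fintype k] [Fintype l]

lemma recovery_mulVec_eq (A' : Matrix c c R) (U : Matrix c l R) (D : Matrix l k R)
    (V : Matrix k c R) (q : k → R) (f : c → R) :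
    (A' * U * D) *ᵥ q + (A' - A' * U * D * V * A') *ᵥ f =
      A' *ᵥ (f + U *ᵥ (D *ᵥ q - D *ᵥ (V *ᵥ (A' *ᵥ f)))) := by
  simp only [mulVec_add, mulVec_sub, sub_mulVec, mulVec_mulVec, Matrix.mul_assoc]
  abel

lemma eq_sub_mulVec_of_mul_eq_one [DecidableEq l] {M : Matrix l k R} {D : Matrix k l R}
    (hMD : M * D = 1) {q : l → R} {b : k → R} {g : l → R} (h : D *ᵥ q + b = D *ᵥ g) :
    q = g - M *ᵥ b := by
  have h' := congrArg (M *ᵥ ·) h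
  simp only [mulVec_add, mulVec_mulVec, hMD, one_mulVec] at h'
  exact eq_sub_of_add_eq h'

end

theorem corner_compression_recovery (nc ns l : ℕ)
    (Acc : Matrix (Fin nc) (Fin nc) ℂ) (hAcc : IsUnit Acc.det)
    (Ass : Matrix (Fin ns) (Fin ns) ℂ)
    (U : Matrix (Fin nc) (Fin l) ℂ) (Bcs : Matrix (Fin l) (Fin ns) ℂ)
    (Bsc : Matrix (Fin ns) (Fin l) ℂ) (Vst : Matrix (Fin l) (Fin nc) ℂ)
    (Acs : Matrix (Fin nc) (Fin ns) ℂ) (hAcs : Acs = U * Bcs)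
    (Asc : Matrix (Fin ns) (Fin nc) ℂ) (hAsc : Asc = Bsc * Vst)
    (hVAU : IsUnit (Vst * Acc⁻¹ * U).det)
    (Dcc : Matrix (Fin l) (Fin l) ℂ) (hDcc : Dcc = (Vst * Acc⁻¹ * U)⁻¹)
    (fc : Fin nc → ℂ) (fs : Fin ns → ℂ)
    (ftc : Fin l → ℂ) (hftc : ftc = Dcc.mulVec (Vst.mulVec (Acc⁻¹.mulVec fc)))
    (qtc : Fin l → ℂ) (qs : Fin ns → ℂ)
    (h1 : Dcc.mulVec qtc + Bcs.mulVec qs = ftc)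
    (h2 : Bsc.mulVec qtc + Ass.mulVec qs = fs)
    (qc : Fin nc → ℂ)
    (hqc : qc = (Acc⁻¹ * U * Dcc).mulVec qtc +
      (Acc⁻¹ - Acc⁻¹ * U * Dcc * Vst * Acc⁻¹).mulVec fc) :
    (Acc.mulVec qc + Acs.mulVec qs = fc ∧ Asc.mulVec qc + Ass.mulVec qs = fs) ∧
      Vst.mulVec qc = qtc := by
  subst hAcs hAsc hftc
  have hqc' : qc = Acc⁻¹ *ᵥ (fc - U *ᵥ (Bcs *ᵥ qs)) := by
    rw [hqc, recovery_mulVec_eq, ← h1, sub_add_cancel_left, mulVec_neg, sub_eq_add_neg]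
  have hVq : Vst *ᵥ qc = qtc := by
    rw [eq_sub_mulVec_of_mul_eq_one (hDcc ▸ mul_nonsing_inv _ hVAU) h1, hqc']
    simp only [mulVec_sub, mulVec_mulVec, Matrix.mul_assoc]
  refine ⟨⟨?_, ?_⟩, hVq⟩
  · rw [hqc', mulVec_mulVec, mul_nonsing_inv _ hAcc, one_mulVec, ← mulVec_mulVec]
    abel
  · rw [← mulVec_mulVec, hVq, h2]
end

section
/- With the corner-compression setup, suppose (q_c, q_s) ∈ ℂ^{n_c} × ℂ^{n_s} solves the original system A_cc·q_c + A_cs·q_s = f_c and A_sc·q_c + A_ss·q_s = f_s. Then, setting q̃_c = V*·q_c, the pair (q̃_c, q_s) solves the compressed system D_cc·q̃_c + B_cs·q_s = f̃_c and B_sc·q̃_c + A_ss·q_s = f_s, and q_c is recovered by the formula q_c = A_cc⁻¹·U·D_cc·q̃_c + (A_cc⁻¹ − A_cc⁻¹·U·D_cc·V*·A_cc⁻¹)·f_c. -/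
open Matrix

/-!
Write `D = (V A⁻¹ U)⁻¹`. If `A q + U y = f`, then `A⁻¹ f = q + A⁻¹ U y`, and applying `D V` gives
`D V A⁻¹ f = D V q + y` because `D (V A⁻¹ U) = 1`; with `y = B_cs q_s` this is the compressed first row.
Substituting the same identity into `A⁻¹ U D V q + A⁻¹ f - A⁻¹ U (D V A⁻¹ f)` leaves `A⁻¹ f - A⁻¹ U y = q`,
which is the recovery formula.
-/

namespace Matrix

variable {m p K : Type*} [Fintype m] [DecidableEq m] [Fintype p] [CommRing K]
  {A : Matrix m m K} {U : Matrix m p K} {V : Matrix p m K}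

theorem inv_mulVec_mulVec_add (hA : IsUnit A.det) (q : m → K) (y : p → K) :
    A⁻¹ *ᵥ (A *ᵥ q + U *ᵥ y) = q + (A⁻¹ * U) *ᵥ y := by
  rw [mulVec_add, mulVec_mulVec, nonsing_inv_mul _ hA, one_mulVec, mulVec_mulVec]

theorem compress_mulVec_mulVec_add [DecidableEq p] (hA : IsUnit A.det) (hS : IsUnit (V * A⁻¹ * U).det)
    (q : m → K) (y : p → K) :
    (V * A⁻¹ * U)⁻¹ *ᵥ (V *ᵥ (A⁻¹ *ᵥ (A *ᵥ q + U *ᵥ y))) = (V * A⁻¹ * U)⁻¹ *ᵥ (V *ᵥ q) + y := by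
  rw [inv_mulVec_mulVec_add hA, mulVec_add, mulVec_add, mulVec_mulVec y V, ← Matrix.mul_assoc,
    mulVec_mulVec y _ (V * A⁻¹ * U), nonsing_inv_mul _ hS, one_mulVec]

theorem recover_mulVec_mulVec_add [DecidableEq p] (hA : IsUnit A.det) (hS : IsUnit (V * A⁻¹ * U).det)
    (q : m → K) (y : p → K) :
    (A⁻¹ * U * (V * A⁻¹ * U)⁻¹) *ᵥ (V *ᵥ q) +
        (A⁻¹ - A⁻¹ * U * (V * A⁻¹ * U)⁻¹ * V * A⁻¹) *ᵥ (A *ᵥ q + U *ᵥ y) = q := by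
  have hP : (A⁻¹ * U * (V * A⁻¹ * U)⁻¹ * V * A⁻¹) *ᵥ (A *ᵥ q + U *ᵥ y) =
      (A⁻¹ * U) *ᵥ ((V * A⁻¹ * U)⁻¹ *ᵥ (V *ᵥ q) + y) := by
    rw [← compress_mulVec_mulVec_add hA hS q y]
    simp only [mulVec_mulVec, Matrix.mul_assoc]
  rw [sub_mulVec, hP, inv_mulVec_mulVec_add hA, ← mulVec_mulVec, mulVec_add]
  abel

end Matrix

theorem corner_compression_forward (nc ns l : ℕ)
    (Acc : Matrix (Fin nc) (Fin nc) ℂ) (hAcc : IsUnit Acc.det)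
    (Ass : Matrix (Fin ns) (Fin ns) ℂ)
    (U : Matrix (Fin nc) (Fin l) ℂ) (Bcs : Matrix (Fin l) (Fin ns) ℂ)
    (Bsc : Matrix (Fin ns) (Fin l) ℂ) (Vst : Matrix (Fin l) (Fin nc) ℂ)
    (Acs : Matrix (Fin nc) (Fin ns) ℂ) (hAcs : Acs = U * Bcs)
    (Asc : Matrix (Fin ns) (Fin nc) ℂ) (hAsc : Asc = Bsc * Vst)
    (hVAU : IsUnit (Vst * Acc⁻¹ * U).det)
    (Dcc : Matrix (Fin l) (Fin l) ℂ) (hDcc : Dcc = (Vst * Acc⁻¹ * U)⁻¹)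
    (fc : Fin nc → ℂ) (fs : Fin ns → ℂ)
    (ftc : Fin l → ℂ) (hftc : ftc = Dcc.mulVec (Vst.mulVec (Acc⁻¹.mulVec fc)))
    (qc : Fin nc → ℂ) (qs : Fin ns → ℂ)
    (h1 : Acc.mulVec qc + Acs.mulVec qs = fc)
    (h2 : Asc.mulVec qc + Ass.mulVec qs = fs)
    (qtc : Fin l → ℂ) (hqtc : qtc = Vst.mulVec qc) :
    (Dcc.mulVec qtc + Bcs.mulVec qs = ftc ∧ Bsc.mulVec qtc + Ass.mulVec qs = fs) ∧
      qc = (Acc⁻¹ * U * Dcc).mulVec qtc +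
        (Acc⁻¹ - Acc⁻¹ * U * Dcc * Vst * Acc⁻¹).mulVec fc := by
  subst hAcs hAsc hDcc hftc hqtc h1 h2
  rw [← mulVec_mulVec qs U]
  refine ⟨⟨?_, by rw [mulVec_mulVec]⟩, ?_⟩
  · exact (compress_mulVec_mulVec_add hAcc hVAU qc _).symm
  · exact (recover_mulVec_mulVec_add hAcc hVAU qc _).symm
end
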